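/- Let 1 < p < ∞, let Ω ⊂ ℝⁿ be open and connected, f ∈ C¹(ℝ), and let u ∈ C³(Ω) satisfy div(|∇u|^{p−2}∇u) + f(u) = 0 in Ω. Let F ∈ C²(ℝ) be a primitive of f, let α̂ ∈ ℝ be a constant, and suppose that Q(x) := ((p−1)/p)|∇u(x)|^p + F(u(x)) = α̂ for all x ∈ Ω and α̂ > F(u(x)) for all x ∈ Ω. Fix u₀ ∈ u(Ω) and define G(s) = ((p−1)/p)^{1/p} ∫_{u₀}^{s} (α̂ − F(t))^{−1/p} dt and v = G∘u. Then v satisfies div(|∇v|^{p−2}∇v) = 0 and |∇v(x)| = 1 for all x ∈ Ω; consequently v is harmonic in Ω. -/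

import Mathlib

/-! The constancy of `Q` makes `|∇u|` a function of `u`, namely
`|∇u|^p = (α̂ - F(u)) / b` with `b = (p-1)/p`, and the profile `G` is chosen so that
`G'(u) = |∇u|⁻¹`. Hence `∇v = ∇u / |∇u|` is a unit field, so that both `Δ_p v` and `Δ v` equal
`div (∇u / |∇u|)`. Writing `∇u / |∇u| = φ(u) |∇u|^{p-2} ∇u` with `φ(u) = |∇u|^{1-p}`, the
product rule gives `div (∇u / |∇u|) = φ(u) Δ_p u + φ'(u) |∇u|^p = -φ(u) f(u) + φ(u) f(u) = 0`. -/

open Set Filter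
open scoped BigOperators Topology

noncomputable section

/-- The `i`-th partial derivative of `u` at `x`. -/
def pder {n : ℕ} (i : Fin n) (u : EuclideanSpace ℝ (Fin n) → ℝ)
    (x : EuclideanSpace ℝ (Fin n)) : ℝ :=
  fderiv ℝ u x (EuclideanSpace.single i (1 : ℝ))

/-- The second partial derivative `∂²u/∂xᵢ∂xⱼ` of `u` at `x`. -/
def pder2 {n : ℕ} (i j : Fin n) (u : EuclideanSpace ℝ (Fin n) → ℝ)
    (x : EuclideanSpace ℝ (Fin n)) : ℝ :=
  fderiv ℝ (fun y => pder j u y) x (EuclideanSpace.single i (1 : ℝ))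

/-- The `p`-Laplacian `Δ_p u = div (|∇u|^{p-2} ∇u)` of `u` at `x`, written as the
divergence of the vector field `y ↦ ‖∇u(y)‖^{p-2} ∇u(y)`. -/
def pLaplacian {n : ℕ} (p : ℝ) (u : EuclideanSpace ℝ (Fin n) → ℝ)
    (x : EuclideanSpace ℝ (Fin n)) : ℝ :=
  ∑ i : Fin n,
    fderiv ℝ (fun y => ‖gradient u y‖ ^ (p - 2) * gradient u y i) x
      (EuclideanSpace.single i (1 : ℝ))

/-- `Ω ⊆ ℝⁿ` is a `C¹` domain: a connected open set which near each boundary point is the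
sublevel set of a `C¹` defining function with nonvanishing differential. -/
def IsC1Domain {n : ℕ} (Ω : Set (EuclideanSpace ℝ (Fin n))) : Prop :=
  IsOpen Ω ∧ IsConnected Ω ∧
    ∀ q ∈ frontier Ω,
      ∃ (ρ : EuclideanSpace ℝ (Fin n) → ℝ) (V : Set (EuclideanSpace ℝ (Fin n))),
        q ∈ V ∧ IsOpen V ∧ ContDiffOn ℝ 1 ρ V ∧ (∀ x ∈ V, fderiv ℝ ρ x ≠ 0) ∧
        Ω ∩ V = {x ∈ V | ρ x < 0}

/-- `ν` is the exterior unit normal field of `∂Ω`: at each boundary point it is a unit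
vector pointing instantaneously out of `closure Ω` and, in the opposite direction, into `Ω`. -/
def IsExteriorUnitNormal {n : ℕ} (Ω : Set (EuclideanSpace ℝ (Fin n)))
    (ν : EuclideanSpace ℝ (Fin n) → EuclideanSpace ℝ (Fin n)) : Prop :=
  ∀ q ∈ frontier Ω, ‖ν q‖ = 1 ∧
    ∃ ε > (0 : ℝ), ∀ t ∈ Ioo (0 : ℝ) ε, q + t • ν q ∉ closure Ω ∧ q - t • ν q ∈ Ω

/-- `u` is a `C³` (in `Ω`, `C¹` up to the boundary) solution of the overdetermined
problem (P): `Δ_p u + f(u) = 0` and `u > 0` in `Ω`, `u = 0` and `∂_ν u = -κ` on `∂Ω`. -/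
structure PSolution {n : ℕ} (p : ℝ) (Ω : Set (EuclideanSpace ℝ (Fin n))) (f : ℝ → ℝ)
    (κ : ℝ) (ν : EuclideanSpace ℝ (Fin n) → EuclideanSpace ℝ (Fin n))
    (u : EuclideanSpace ℝ (Fin n) → ℝ) : Prop where
  contDiffOn_int : ContDiffOn ℝ 3 u Ω
  contDiffOn_bd : ContDiffOn ℝ 1 u (closure Ω)
  eqn : ∀ x ∈ Ω, pLaplacian p u x + f (u x) = 0
  pos : ∀ x ∈ Ω, 0 < u x
  dirichlet : ∀ q ∈ frontier Ω, u q = 0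
  neumann : ∀ q ∈ frontier Ω, (inner ℝ (gradient u q) (ν q) : ℝ) = -κ

/-- `F` is a primitive of `f`. -/
def IsPrimitive (F f : ℝ → ℝ) : Prop := ∀ s : ℝ, HasDerivAt F (f s) s

/-- The `Q`-function `Q(x) = ((p-1)/p) |∇u(x)|^p + F(u(x))`. -/
def Qfun {n : ℕ} (p : ℝ) (F : ℝ → ℝ) (u : EuclideanSpace ℝ (Fin n) → ℝ)
    (x : EuclideanSpace ℝ (Fin n)) : ℝ :=
  (p - 1) / p * ‖gradient u x‖ ^ p + F (u x)

/-- Whenever `F u₀ = 0`, one has `F(u) = O(|u - u₀|^p)` as `u → u₀`. -/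
def BigOCond (p : ℝ) (F : ℝ → ℝ) : Prop :=
  ∀ u₀ : ℝ, F u₀ = 0 → Asymptotics.IsBigO (𝓝 u₀) F fun s => |s - u₀| ^ p

/-- `Ω` is an (open) half-space. -/
def IsHalfSpace {n : ℕ} (Ω : Set (EuclideanSpace ℝ (Fin n))) : Prop :=
  ∃ x₀ a : EuclideanSpace ℝ (Fin n), a ≠ 0 ∧ Ω = {x | 0 < (inner ℝ a (x - x₀) : ℝ)}

/-- `Ω` is a slab: the open region between two parallel hyperplanes. -/
def IsSlab {n : ℕ} (Ω : Set (EuclideanSpace ℝ (Fin n))) : Prop :=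
  ∃ (x₀ a : EuclideanSpace ℝ (Fin n)) (z₁ z₂ : ℝ), a ≠ 0 ∧ z₁ < z₂ ∧
    Ω = {x | (inner ℝ a (x - x₀) : ℝ) ∈ Ioo z₁ z₂}

/-- `u` is parallel (`1`-dimensional): `u(x) = g(a · (x - x₀))` on `{a · (x - x₀) > 0}`. -/
def IsParallel {n : ℕ} (u : EuclideanSpace ℝ (Fin n) → ℝ) : Prop :=
  ∃ (x₀ a : EuclideanSpace ℝ (Fin n)) (g : ℝ → ℝ),
    ∀ x : EuclideanSpace ℝ (Fin n), 0 < (inner ℝ a (x - x₀) : ℝ) → u x = g ((inner ℝ a (x - x₀) : ℝ))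

/-- `u` is parallel on `Ω`: `u(x) = g(a · (x - x₀))` for all `x ∈ Ω`. -/
def IsParallelOn {n : ℕ} (Ω : Set (EuclideanSpace ℝ (Fin n)))
    (u : EuclideanSpace ℝ (Fin n) → ℝ) : Prop :=
  ∃ (x₀ a : EuclideanSpace ℝ (Fin n)) (g : ℝ → ℝ), a ≠ 0 ∧
    ∀ x ∈ Ω, u x = g ((inner ℝ a (x - x₀) : ℝ))

/-- `H` is the mean curvature of `∂Ω` with respect to the exterior unit normal `ν`:
`H = div N / (n-1)` on `∂Ω` for some `C¹` unit vector field `N` extending `ν` to a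
neighbourhood of `∂Ω`. -/
def IsMeanCurvature {n : ℕ} (Ω : Set (EuclideanSpace ℝ (Fin n)))
    (ν : EuclideanSpace ℝ (Fin n) → EuclideanSpace ℝ (Fin n))
    (H : EuclideanSpace ℝ (Fin n) → ℝ) : Prop :=
  ∃ (N : EuclideanSpace ℝ (Fin n) → EuclideanSpace ℝ (Fin n))
    (U : Set (EuclideanSpace ℝ (Fin n))),
      IsOpen U ∧ frontier Ω ⊆ U ∧ ContDiffOn ℝ 1 N U ∧ (∀ x ∈ U, ‖N x‖ = 1) ∧
      (∀ q ∈ frontier Ω, N q = ν q) ∧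
      ∀ q ∈ frontier Ω,
        H q = (∑ i : Fin n,
            fderiv ℝ (fun y => N y i) q (EuclideanSpace.single i (1 : ℝ))) / ((n : ℝ) - 1)

/-- The function v = G ∘ u, where G(s) = ((p-1)/p)^{1/p} ∫_{u₀}^s (α - F(t))^{-1/p} dt. -/
def Gcomp {n : ℕ} (p α u₀ : ℝ) (F : ℝ → ℝ) (u : EuclideanSpace ℝ (Fin n) → ℝ) (y : EuclideanSpace ℝ (Fin n)) : ℝ :=
  ((p - 1) / p) ^ (1 / p) * ∫ t in u₀..(u y), (α - F t) ^ (-(1 / p))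

theorem HasDerivAt.gradient_comp {E : Type*} [NormedAddCommGroup E] [InnerProductSpace ℝ E]
    [CompleteSpace E] {φ : ℝ → ℝ} {φ' : ℝ} {u : E → ℝ} {x : E}
    (hφ : HasDerivAt φ φ' (u x)) (hu : DifferentiableAt ℝ u x) :
    gradient (fun y => φ (u y)) x = φ' • gradient u x := by
  have hcomp : HasFDerivAt (fun y => φ (u y)) (φ' • fderiv ℝ u x) x :=
    hφ.comp_hasFDerivAt x hu.hasFDerivAt
  rw [gradient, hcomp.fderiv, map_smul, gradient]

theorem ContDiffOn.differentiableAt_gradient {E : Type*} [NormedAddCommGroup E]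
    [InnerProductSpace ℝ E] [CompleteSpace E] {u : E → ℝ} {Ω : Set E} {x : E}
    (hu : ContDiffOn ℝ 2 u Ω) (hΩ : IsOpen Ω) (hx : x ∈ Ω) :
    DifferentiableAt ℝ (gradient u) x :=
  (InnerProductSpace.toDual ℝ E).symm.toContinuousLinearEquiv.differentiableAt.comp x
    (((hu.fderiv_of_isOpen hΩ (m := 1) (by norm_num)).differentiableOn one_ne_zero)
      |>.differentiableAt (hΩ.mem_nhds hx))

section Divergence

variable {n : ℕ}

def divergence (V : EuclideanSpace ℝ (Fin n) → EuclideanSpace ℝ (Fin n))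
    (x : EuclideanSpace ℝ (Fin n)) : ℝ :=
  ∑ i : Fin n, fderiv ℝ (fun y => V y i) x (EuclideanSpace.single i 1)

theorem fderiv_apply_single_eq_gradient (φ : EuclideanSpace ℝ (Fin n) → ℝ)
    (x : EuclideanSpace ℝ (Fin n)) (i : Fin n) :
    fderiv ℝ φ x (EuclideanSpace.single i 1) = gradient φ x i := by
  rw [← inner_gradient_left, EuclideanSpace.inner_single_right]
  simp

theorem pLaplacian_eq_divergence (p : ℝ) (u : EuclideanSpace ℝ (Fin n) → ℝ)
    (x : EuclideanSpace ℝ (Fin n)) :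
    pLaplacian p u x = divergence (fun y => ‖gradient u y‖ ^ (p - 2) • gradient u y) x :=
  rfl

theorem sum_pder2_eq_divergence_gradient (u : EuclideanSpace ℝ (Fin n) → ℝ)
    (x : EuclideanSpace ℝ (Fin n)) :
    ∑ i : Fin n, pder2 i i u x = divergence (gradient u) x := by
  simp only [pder2, pder, fderiv_apply_single_eq_gradient, divergence]

theorem Filter.EventuallyEq.divergence_eq
    {V W : EuclideanSpace ℝ (Fin n) → EuclideanSpace ℝ (Fin n)}
    {x : EuclideanSpace ℝ (Fin n)} (h : V =ᶠ[𝓝 x] W) : divergence V x = divergence W x := by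
  unfold divergence
  congr! 2 with i
  exact (h.fun_comp (· i)).fderiv_eq

theorem divergence_smul {ψ : EuclideanSpace ℝ (Fin n) → ℝ}
    {V : EuclideanSpace ℝ (Fin n) → EuclideanSpace ℝ (Fin n)} {x : EuclideanSpace ℝ (Fin n)}
    (hψ : DifferentiableAt ℝ ψ x) (hV : DifferentiableAt ℝ V x) :
    divergence (fun y => ψ y • V y) x = ψ x * divergence V x + inner ℝ (gradient ψ x) (V x) := by
  have hVi (i : Fin n) : DifferentiableAt ℝ (fun y => V y i) x :=
    (EuclideanSpace.proj (𝕜 := ℝ) i).differentiableAt.comp x hV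
  simp only [divergence, PiLp.smul_apply, smul_eq_mul, fderiv_fun_mul hψ (hVi _), add_apply,
    smul_apply, fderiv_apply_single_eq_gradient ψ, Finset.sum_add_distrib, Finset.mul_sum,
    PiLp.inner_apply, RCLike.inner_apply, conj_trivial]

end Divergence

theorem divergence_comp_smul_pFlux {n : ℕ} {p φ' : ℝ} {φ : ℝ → ℝ}
    {u : EuclideanSpace ℝ (Fin n) → ℝ} {x : EuclideanSpace ℝ (Fin n)}
    (hu : DifferentiableAt ℝ u x) (hgu : DifferentiableAt ℝ (gradient u) x)
    (hx : gradient u x ≠ 0) (hφ : HasDerivAt φ φ' (u x)) :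
    divergence (fun y => φ (u y) • (‖gradient u y‖ ^ (p - 2) • gradient u y)) x
      = φ (u x) * pLaplacian p u x + φ' * ‖gradient u x‖ ^ p := by
  have hρ : 0 < ‖gradient u x‖ := norm_pos_iff.2 hx
  have hflux : DifferentiableAt ℝ (fun y => ‖gradient u y‖ ^ (p - 2) • gradient u y) x :=
    ((hgu.norm ℝ hx).rpow_const (Or.inl hρ.ne')).smul hgu
  rw [divergence_smul (ψ := fun y => φ (u y)) (hφ.differentiableAt.comp x hu) hflux,
    ← pLaplacian_eq_divergence, hφ.gradient_comp hu, real_inner_smul_left, real_inner_smul_right,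
    real_inner_self_eq_norm_sq, ← Real.rpow_natCast, ← Real.rpow_add hρ]
  norm_num

section ConstantQ

variable {n : ℕ} {p α : ℝ} {F : ℝ → ℝ} {u : EuclideanSpace ℝ (Fin n) → ℝ}
  {y : EuclideanSpace ℝ (Fin n)}

theorem rpow_norm_gradient_of_Qfun_eq (hp : 1 < p) (hQ : Qfun p F u y = α) :
    ‖gradient u y‖ ^ p = (α - F (u y)) / ((p - 1) / p) := by
  have hb : 0 < (p - 1) / p := div_pos (by linarith) (by linarith)
  rw [eq_div_iff hb.ne', ← hQ, Qfun]
  ring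

theorem norm_gradient_pos_of_Qfun_eq (hp : 1 < p) (hQ : Qfun p F u y = α)
    (hα : F (u y) < α) : 0 < ‖gradient u y‖ := by
  refine (norm_nonneg _).lt_of_ne fun h0 => ?_
  have hpow := rpow_norm_gradient_of_Qfun_eq hp hQ
  rw [← h0, Real.zero_rpow (by linarith)] at hpow
  have hb : 0 < (p - 1) / p := div_pos (by linarith) (by linarith)
  exact (div_pos (sub_pos.2 hα) hb).ne' hpow.symm

end ConstantQ

theorem divergence_inv_norm_smul_gradient_eq_zero {n : ℕ} {p α : ℝ} {f F : ℝ → ℝ}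
    {u : EuclideanSpace ℝ (Fin n) → ℝ} {Ω : Set (EuclideanSpace ℝ (Fin n))}
    {x : EuclideanSpace ℝ (Fin n)} (hp : 1 < p) (hΩ : IsOpen Ω) (hu : ContDiffOn ℝ 2 u Ω)
    (hFf : IsPrimitive F f) (hQ : ∀ y ∈ Ω, Qfun p F u y = α) (hα : ∀ y ∈ Ω, F (u y) < α)
    (hx : x ∈ Ω) (heq : pLaplacian p u x + f (u x) = 0) :
    divergence (fun y => ‖gradient u y‖⁻¹ • gradient u y) x = 0 := by
  set b := (p - 1) / p with hb_def
  set q := (1 - p) / p with hq_def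
  have hb : 0 < b := div_pos (by linarith) (by linarith)
  have hqb : q / b = -1 := by
    rw [hq_def, hb_def, div_div_div_cancel_right₀ (by linarith : p ≠ 0),
      div_eq_iff (by linarith : p - 1 ≠ 0)]
    ring
  -- `|∇u|^{1-p}` as a function of `u`, read off from `Q ≡ α`
  set φ : ℝ → ℝ := fun t => ((α - F t) / b) ^ q
  have hnormalize : (fun y => ‖gradient u y‖⁻¹ • gradient u y)
      =ᶠ[𝓝 x] fun y => φ (u y) • (‖gradient u y‖ ^ (p - 2) • gradient u y) := by
    filter_upwards [hΩ.mem_nhds hx] with y hy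
    have hρ := norm_gradient_pos_of_Qfun_eq hp (hQ y hy) (hα y hy)
    have hpow : ‖gradient u y‖ ^ p = (α - F (u y)) / b :=
      rpow_norm_gradient_of_Qfun_eq hp (hQ y hy)
    rw [smul_smul]
    congr 1
    show _ = ((α - F (u y)) / b) ^ q * _
    rw [← hpow, ← Real.rpow_mul hρ.le, ← Real.rpow_add hρ, ← Real.rpow_neg_one, hq_def]
    congr 1
    field_simp
    ring
  have hw : 0 < (α - F (u x)) / b := div_pos (sub_pos.2 (hα x hx)) hb
  have hφ : HasDerivAt φ (-f (u x) / b * q * ((α - F (u x)) / b) ^ (q - 1)) (u x) :=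
    (((hFf (u x)).const_sub α).div_const b).rpow_const (Or.inl hw.ne')
  rw [hnormalize.divergence_eq,
    divergence_comp_smul_pFlux (hu.differentiableOn (by norm_num) x hx |>.differentiableAt
      (hΩ.mem_nhds hx)) (hu.differentiableAt_gradient hΩ hx)
      (norm_pos_iff.1 (norm_gradient_pos_of_Qfun_eq hp (hQ x hx) (hα x hx))) hφ,
    rpow_norm_gradient_of_Qfun_eq hp (hQ x hx), eq_neg_of_add_eq_zero_left heq,
    Real.rpow_sub_one hw.ne']
  show ((α - F (u x)) / b) ^ q * _ + _ = _
  rw [mul_assoc _ (_ / _), div_mul_cancel₀ _ hw.ne']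
  linear_combination -f (u x) * ((α - F (u x)) / b) ^ q * hqb

theorem hasDerivAt_intervalIntegral_of_uIcc_subset {h : ℝ → ℝ} {U : Set ℝ} {a s : ℝ}
    (hU : IsOpen U) (hh : ContinuousOn h U) (has : uIcc a s ⊆ U) :
    HasDerivAt (fun t => ∫ τ in a..t, h τ) (h s) s :=
  intervalIntegral.integral_hasDerivAt_right (hh.mono has).intervalIntegrable
    (hh.stronglyMeasurableAtFilter hU s (has right_mem_uIcc))
    (hh.continuousAt (hU.mem_nhds (has right_mem_uIcc)))

theorem gradient_Gcomp {n : ℕ} {p α u₀ : ℝ} {f F : ℝ → ℝ} {u : EuclideanSpace ℝ (Fin n) → ℝ}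
    {Ω : Set (EuclideanSpace ℝ (Fin n))} {y : EuclideanSpace ℝ (Fin n)} (hp : 1 < p)
    (hΩo : IsOpen Ω) (hΩc : IsPreconnected Ω) (hu : DifferentiableOn ℝ u Ω)
    (hFf : IsPrimitive F f) (hQ : ∀ x ∈ Ω, Qfun p F u x = α) (hα : ∀ x ∈ Ω, F (u x) < α)
    (hu₀ : u₀ ∈ u '' Ω) (hy : y ∈ Ω) :
    gradient (Gcomp p α u₀ F u) y = ‖gradient u y‖⁻¹ • gradient u y := by
  have hF : Continuous F := continuous_iff_continuousAt.2 fun s => (hFf s).continuousAt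
  have hh : ContinuousOn (fun t => (α - F t) ^ (-(1 / p))) {t | F t < α} := fun t ht =>
    ((continuous_const.sub hF).continuousAt.rpow_const (Or.inl (sub_pos.2 ht).ne'))
      |>.continuousWithinAt
  have hsub : uIcc u₀ (u y) ⊆ {t | F t < α} := by
    refine ((hΩc.image u hu.continuousOn).ordConnected.uIcc_subset hu₀ ⟨y, hy, rfl⟩).trans ?_
    rintro _ ⟨x, hx, rfl⟩
    exact hα x hx
  have hG := ((hasDerivAt_intervalIntegral_of_uIcc_subset
    (isOpen_lt hF continuous_const) hh hsub).const_mul (((p - 1) / p) ^ (1 / p))).gradient_comp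
    ((hu y hy).differentiableAt (hΩo.mem_nhds hy))
  unfold Gcomp
  rw [hG]
  congr 1
  have hb : 0 < (p - 1) / p := div_pos (by linarith) (by linarith)
  have hρ := norm_gradient_pos_of_Qfun_eq hp (hQ y hy) (hα y hy)
  have hpow := rpow_norm_gradient_of_Qfun_eq hp (hQ y hy)
  rw [eq_div_iff hb.ne', mul_comm] at hpow
  rw [← hpow, Real.mul_rpow hb.le (by positivity), ← Real.rpow_mul hρ.le, mul_neg,
    mul_one_div_cancel (by linarith), Real.rpow_neg_one, Real.rpow_neg hb.le, ← mul_assoc,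
    mul_inv_cancel₀ (by positivity), one_mul]

theorem statement_14_general (n : ℕ) (p : ℝ) (hp : 1 < p)
    (Ω : Set (EuclideanSpace ℝ (Fin n))) (hΩo : IsOpen Ω) (hΩc : IsConnected Ω)
    (f : ℝ → ℝ)
    (u : EuclideanSpace ℝ (Fin n) → ℝ) (hu : ContDiffOn ℝ 3 u Ω)
    (heq : ∀ x ∈ Ω, pLaplacian p u x + f (u x) = 0)
    (F : ℝ → ℝ) (hFf : IsPrimitive F f)
    (α : ℝ) (hQ : ∀ x ∈ Ω, Qfun p F u x = α)
    (hα : ∀ x ∈ Ω, F (u x) < α)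
    (u₀ : ℝ) (hu₀ : u₀ ∈ u '' Ω) :
    ∀ x ∈ Ω,
      pLaplacian p (Gcomp p α u₀ F u) x = 0 ∧
      ‖gradient (Gcomp p α u₀ F u) x‖ = 1 ∧
      (∑ i : Fin n, pder2 i i (Gcomp p α u₀ F u) x) = 0 := by
  intro x hx
  have hgrad : ∀ y ∈ Ω, gradient (Gcomp p α u₀ F u) y = ‖gradient u y‖⁻¹ • gradient u y :=
    fun y hy => gradient_Gcomp hp hΩo hΩc.isPreconnected (hu.differentiableOn (by norm_num))
      hFf hQ hα hu₀ hy
  have hunit : ∀ y ∈ Ω, ‖gradient (Gcomp p α u₀ F u) y‖ = 1 := fun y hy => by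
    rw [hgrad y hy]
    exact norm_smul_inv_norm <| norm_pos_iff.1 <|
      norm_gradient_pos_of_Qfun_eq hp (hQ y hy) (hα y hy)
  have hdiv : divergence (gradient (Gcomp p α u₀ F u)) x = 0 := by
    rw [Filter.EventuallyEq.divergence_eq (eventually_of_mem (hΩo.mem_nhds hx) hgrad)]
    exact divergence_inv_norm_smul_gradient_eq_zero hp hΩo (hu.of_le (by norm_num)) hFf hQ hα hx
      (heq x hx)
  refine ⟨?_, hunit x hx, (sum_pder2_eq_divergence_gradient _ x).trans hdiv⟩
  rw [pLaplacian_eq_divergence, ← hdiv]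
  refine Filter.EventuallyEq.divergence_eq ?_
  filter_upwards [hΩo.mem_nhds hx] with y hy
  rw [hunit y hy, Real.one_rpow, one_smul]

/-- when Q ≡ α̂ and α̂ > F∘u on Ω, the function v = G∘u is p-harmonic with
|∇v| ≡ 1, and hence harmonic. -/
theorem statement_14 (n : ℕ) (p : ℝ) (hp : 1 < p)
    (Ω : Set (EuclideanSpace ℝ (Fin n))) (hΩo : IsOpen Ω) (hΩc : IsConnected Ω)
    (f : ℝ → ℝ) (hf : ContDiff ℝ 1 f)
    (u : EuclideanSpace ℝ (Fin n) → ℝ) (hu : ContDiffOn ℝ 3 u Ω)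
    (heq : ∀ x ∈ Ω, pLaplacian p u x + f (u x) = 0)
    (F : ℝ → ℝ) (hF : ContDiff ℝ 2 F) (hFf : IsPrimitive F f)
    (α : ℝ) (hQ : ∀ x ∈ Ω, Qfun p F u x = α)
    (hα : ∀ x ∈ Ω, F (u x) < α)
    (u₀ : ℝ) (hu₀ : u₀ ∈ u '' Ω) :
    ∀ x ∈ Ω,
      pLaplacian p (Gcomp p α u₀ F u) x = 0 ∧
      ‖gradient (Gcomp p α u₀ F u) x‖ = 1 ∧
      (∑ i : Fin n, pder2 i i (Gcomp p α u₀ F u) x) = 0 :=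
  statement_14_general n p hp Ω hΩo hΩc f u hu heq F hFf α hQ hα u₀ hu₀
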